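/- arXiv:2204.12735 — 2 statements merged into one kernel-verified Lean document; each statement's English description precedes it below -/
import Mathlib

section
/- Let B₁,…,B_k be the d-dimensional cardinal B-splines of order q = ⌈β⌉ with k = J^d equidistant knots per coordinate, and let φ₁,…,φ_k be ReLU network functions with the same supports as the corresponding B-splines and satisfying ‖B_j − φ_j‖_∞ ≤ C/n for all j, where k²/n → 0. Then the rescaled basis √k φ = (√k φ₁,…,√k φ_k) is nearly orthonormal: its Gram matrix Q_k + R_k, with (Q_k)_{ij} = ⟨√k B_i, √k B_j⟩_{L₂} and (R_k)_{ij} = ⟨√k φ_i, √k φ_j⟩_{L₂} − ⟨√k B_i, √k B_j⟩_{L₂}, satisfies (c/2) I_k ≤ Q_k + R_k ≤ 2C' I_k for n large enough, where c, C' are the constants bounding the eigenvalues of Q_k. -/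
open MeasureTheory Filter

noncomputable section

/-- The unit cube `[0,1]^d`. -/
def cube (d : ℕ) : Set (Fin d → ℝ) := Set.univ.pi fun _ => Set.Icc (0:ℝ) 1

/-- Equidistant knots `t_i = i/J` on `[0,1]`, with the boundary knots repeated. -/
def knot (J : ℕ) (i : ℤ) : ℝ := min 1 (max 0 ((i : ℝ) / (J : ℝ)))

/-- One-dimensional cardinal B-splines of order `q` with equidistant knots
(Cox–de Boor recursion). -/
def bspline (J : ℕ) : ℕ → ℤ → ℝ → ℝ
  | 0, _, _ => 0
  | 1, j, x => if knot J j ≤ x ∧ x < knot J (j + 1) then 1 else 0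
  | (q + 2), j, x =>
      (x - knot J j) / (knot J (j + (q : ℤ) + 1) - knot J j) * bspline J (q + 1) j x
        + (knot J (j + (q : ℤ) + 2) - x) / (knot J (j + (q : ℤ) + 2) - knot J (j + 1)) *
            bspline J (q + 1) (j + 1) x

/-- `d`-dimensional cardinal B-splines: tensor products of one-dimensional ones. -/
def bsplineD (J q d : ℕ) (j : Fin d → ℤ) (x : Fin d → ℝ) : ℝ :=
  ∏ ℓ, bspline J q (j ℓ) (x ℓ)

/-- Index set of the B-splines relevant on `[0,1]^d` (there are `k` of them,
`k = J^d` up to boundary conventions). -/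
def splineIdx (d q J : ℕ) : Finset (Fin d → ℤ) :=
  Fintype.piFinset fun _ => Finset.Icc (1 - (q : ℤ)) ((J : ℤ) - 1)

lemma knot_mono (J : ℕ) {i j : ℤ} (h : i ≤ j) : knot J i ≤ knot J j := by
  unfold knot
  rcases Nat.eq_zero_or_pos J with hJ | hJ
  · simp [hJ]
  · have : (i : ℝ) / J ≤ (j : ℝ) / J := by
      apply div_le_div_of_nonneg_right ?_ (by positivity)
      exact_mod_cast h
    exact min_le_min le_rfl (max_le_max le_rfl this)

lemma bspline_support (J : ℕ) : ∀ (q : ℕ) (j : ℤ) (x : ℝ),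
    bspline J q j x ≠ 0 → knot J j ≤ x ∧ x < knot J (j + q) := by
  intro q
  induction q using Nat.strong_induction_on with
  | _ q ih =>
    match q with
    | 0 => intro j x h; simp [bspline] at h
    | 1 =>
      intro j x h
      simp only [bspline] at h
      split_ifs at h with hc
      · exact ⟨hc.1, by exact_mod_cast hc.2⟩
      · simp at h
    | (q + 2) =>
      intro j x h
      simp only [bspline] at h
      have key : bspline J (q+1) j x ≠ 0 ∨ bspline J (q+1) (j+1) x ≠ 0 := by
        by_contra hcon
        push_neg at hcon
        rw [hcon.1, hcon.2] at h
        simp at h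
      rcases key with hk | hk
      · obtain ⟨h1, h2⟩ := ih (q+1) (by omega) j x hk
        refine ⟨h1, lt_of_lt_of_le h2 (knot_mono J (by push_cast; omega))⟩
      · obtain ⟨h1, h2⟩ := ih (q+1) (by omega) (j+1) x hk
        refine ⟨le_trans (knot_mono J (by omega)) h1,
          lt_of_lt_of_le h2 (knot_mono J (by push_cast; omega))⟩

lemma bspline_nonneg_le (J : ℕ) : ∀ (q : ℕ) (j : ℤ) (x : ℝ),
    0 ≤ bspline J q j x ∧ bspline J q j x ≤ 2 ^ q := by
  intro q
  induction q using Nat.strong_induction_on with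
  | _ q ih =>
    match q with
    | 0 => intro j x; simp [bspline]
    | 1 =>
      intro j x
      simp only [bspline]
      split_ifs <;> norm_num
    | (q + 2) =>
      intro j x
      simp only [bspline]
      have bound1 : 0 ≤ (x - knot J j) / (knot J (j + (q:ℤ) + 1) - knot J j) * bspline J (q+1) j x
          ∧ (x - knot J j) / (knot J (j + (q:ℤ) + 1) - knot J j) * bspline J (q+1) j x
            ≤ 2 ^ (q+1) := by
        rcases eq_or_ne (bspline J (q+1) j x) 0 with h0 | h0
        · rw [h0]; norm_num
        · obtain ⟨hs1, hs2⟩ := bspline_support J (q+1) j x h0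
          have hs2' : x < knot J (j + (q:ℤ) + 1) := by
            have : (j : ℤ) + (q+1 : ℕ) = j + (q:ℤ) + 1 := by push_cast; ring
            rwa [this] at hs2
          have hden : (0:ℝ) ≤ knot J (j + (q:ℤ) + 1) - knot J j :=
            sub_nonneg.2 (knot_mono J (by omega))
          have hco : 0 ≤ (x - knot J j) / (knot J (j + (q:ℤ) + 1) - knot J j) ∧
              (x - knot J j) / (knot J (j + (q:ℤ) + 1) - knot J j) ≤ 1 := by
            rcases eq_or_lt_of_le hden with he | hlt
            · rw [← he]; norm_num
            · constructor
              · exact div_nonneg (by linarith) (by linarith)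
              · rw [div_le_one hlt]; linarith
          obtain ⟨hb0, hb1⟩ := ih (q+1) (by omega) j x
          constructor
          · exact mul_nonneg hco.1 hb0
          · calc _ ≤ 1 * bspline J (q+1) j x := by
                  apply mul_le_mul_of_nonneg_right hco.2 hb0
              _ ≤ 2 ^ (q+1) := by rw [one_mul]; exact hb1
      have bound2 : 0 ≤ (knot J (j + (q:ℤ) + 2) - x) / (knot J (j + (q:ℤ) + 2) - knot J (j + 1))
            * bspline J (q+1) (j+1) x
          ∧ (knot J (j + (q:ℤ) + 2) - x) / (knot J (j + (q:ℤ) + 2) - knot J (j + 1))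
            * bspline J (q+1) (j+1) x ≤ 2 ^ (q+1) := by
        rcases eq_or_ne (bspline J (q+1) (j+1) x) 0 with h0 | h0
        · rw [h0]; norm_num
        · obtain ⟨hs1, hs2⟩ := bspline_support J (q+1) (j+1) x h0
          have hs2' : x < knot J (j + (q:ℤ) + 2) := by
            have : (j : ℤ) + 1 + (q+1 : ℕ) = j + (q:ℤ) + 2 := by push_cast; ring
            rwa [this] at hs2
          have hden : (0:ℝ) ≤ knot J (j + (q:ℤ) + 2) - knot J (j + 1) :=
            sub_nonneg.2 (knot_mono J (by omega))
          have hco : 0 ≤ (knot J (j + (q:ℤ) + 2) - x) / (knot J (j + (q:ℤ) + 2) - knot J (j+1)) ∧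
              (knot J (j + (q:ℤ) + 2) - x) / (knot J (j + (q:ℤ) + 2) - knot J (j+1)) ≤ 1 := by
            rcases eq_or_lt_of_le hden with he | hlt
            · rw [← he]; norm_num
            · constructor
              · exact div_nonneg (by linarith) (by linarith)
              · rw [div_le_one hlt]; linarith
          obtain ⟨hb0, hb1⟩ := ih (q+1) (by omega) (j+1) x
          constructor
          · exact mul_nonneg hco.1 hb0
          · calc _ ≤ 1 * bspline J (q+1) (j+1) x := by
                  apply mul_le_mul_of_nonneg_right hco.2 hb0
              _ ≤ 2 ^ (q+1) := by rw [one_mul]; exact hb1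
      constructor
      · exact add_nonneg bound1.1 bound2.1
      · have : (2:ℝ) ^ (q+1) + 2 ^ (q+1) = 2 ^ (q+2) := by ring
        linarith [bound1.2, bound2.2]

lemma bspline_measurable (J : ℕ) : ∀ (q : ℕ) (j : ℤ),
    Measurable (fun x => bspline J q j x) := by
  intro q
  induction q using Nat.strong_induction_on with
  | _ q ih =>
    match q with
    | 0 => intro j; simp only [bspline]; exact measurable_const
    | 1 =>
      intro j
      simp only [bspline]
      have : MeasurableSet {x : ℝ | knot J j ≤ x ∧ x < knot J (j + 1)} := by
        have : {x : ℝ | knot J j ≤ x ∧ x < knot J (j + 1)} = Set.Ico (knot J j) (knot J (j+1)) :=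
          rfl
        rw [this]; exact measurableSet_Ico
      exact Measurable.ite this measurable_const measurable_const
    | (q + 2) =>
      intro j
      simp only [bspline]
      apply Measurable.add
      · exact (((measurable_id.sub measurable_const).div measurable_const).mul
          (ih (q+1) (by omega) j))
      · exact (((measurable_const.sub measurable_id).div measurable_const).mul
          (ih (q+1) (by omega) (j+1)))

lemma bsplineD_abs_le (J q d : ℕ) (j : Fin d → ℤ) (x : Fin d → ℝ) :
    |bsplineD J q d j x| ≤ ((2:ℝ) ^ q) ^ d := by
  have h0 : 0 ≤ bsplineD J q d j x :=
    Finset.prod_nonneg fun ℓ _ => (bspline_nonneg_le J q (j ℓ) (x ℓ)).1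
  rw [abs_of_nonneg h0, bsplineD]
  calc ∏ ℓ, bspline J q (j ℓ) (x ℓ) ≤ ∏ _ℓ : Fin d, (2:ℝ) ^ q := by
        apply Finset.prod_le_prod
        · exact fun ℓ _ => (bspline_nonneg_le J q (j ℓ) (x ℓ)).1
        · exact fun ℓ _ => (bspline_nonneg_le J q (j ℓ) (x ℓ)).2
    _ = ((2:ℝ) ^ q) ^ d := by simp

lemma bsplineD_measurable (J q d : ℕ) (j : Fin d → ℤ) :
    Measurable (bsplineD J q d j) := by
  unfold bsplineD
  apply Finset.measurable_prod
  intro ℓ _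
  exact (bspline_measurable J q (j ℓ)).comp (measurable_pi_apply ℓ)

lemma measurableSet_cube (d : ℕ) : MeasurableSet (cube d) :=
  MeasurableSet.univ_pi fun _ => measurableSet_Icc

lemma volume_cube (d : ℕ) : volume (cube d) = 1 := by
  rw [cube, volume_pi_pi]
  simp [Real.volume_Icc]

lemma sq_helper (d : ℕ) (u : (Fin d → ℝ) → ℝ) (hu : Measurable u) (A2 : ℝ)
    (hA : ∀ x, u x ^ 2 ≤ A2) :
    IntegrableOn (fun x => u x ^ 2) (cube d) volume ∧ (∫ x in cube d, u x ^ 2) ≤ A2 := by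
  have hfin : volume (cube d) < ⊤ := by rw [volume_cube]; exact ENNReal.one_lt_top
  have hconst : IntegrableOn (fun _ : Fin d → ℝ => A2) (cube d) volume :=
    integrableOn_const hfin.ne
  have hint : IntegrableOn (fun x => u x ^ 2) (cube d) volume := by
    apply Integrable.mono' hconst ((hu.pow_const 2).aestronglyMeasurable)
    filter_upwards with x
    rw [Real.norm_eq_abs, abs_of_nonneg (sq_nonneg _)]
    exact hA x
  refine ⟨hint, ?_⟩
  calc (∫ x in cube d, u x ^ 2) ≤ ∫ _x in cube d, A2 :=
        setIntegral_mono_on hint hconst (measurableSet_cube d) (fun x _ => hA x)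
    _ = A2 := by rw [setIntegral_const]; simp [Measure.real, volume_cube]


set_option maxHeartbeats 1000000 in
/-- If the functions `φ_j` have the same supports as the corresponding
`d`-dimensional cardinal B-splines `B_j` of order `q`, satisfy `‖B_j − φ_j‖_∞ ≤ C/n`,
and `k²/n → 0` (`k = J^d`), then for `n` large enough the rescaled basis `√k φ` is nearly
orthonormal: its Gram matrix `Q_k + R_k` satisfies `(c/2) I_k ≤ Q_k + R_k ≤ 2C' I_k`
(as quadratic forms), where `c, C'` are the constants bounding the eigenvalues of the
Gram matrix `Q_k` of `√k B`. -/
theorem perturbed_spline_basis_nearly_orthonormal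
    (d q : ℕ) (hd : 1 ≤ d) (hq : 1 ≤ q)
    (J : ℕ → ℕ) (hJ : ∀ n, 1 ≤ J n) (C : ℝ) (hC : 0 < C)
    (φ : ∀ n : ℕ, (Fin d → ℤ) → (Fin d → ℝ) → ℝ)
    (hmeas : ∀ n j, Measurable (φ n j))
    (hsupp : ∀ n j, Function.support (φ n j) = Function.support (bsplineD (J n) q d j))
    (happrox : ∀ n j x, |bsplineD (J n) q d j x - φ n j x| ≤ C / n)
    (hk : Tendsto (fun n : ℕ => ((J n : ℝ) ^ d) ^ 2 / n) atTop (nhds 0))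
    (c C' : ℝ) (hc : 0 < c) (hC' : 0 < C')
    (hQ : ∀ (n : ℕ) (θ : (Fin d → ℤ) → ℝ),
      c * ∑ j ∈ splineIdx d q (J n), θ j ^ 2
          ≤ ((J n : ℝ) ^ d) *
              ∫ x in cube d, (∑ j ∈ splineIdx d q (J n), θ j * bsplineD (J n) q d j x) ^ 2
        ∧ ((J n : ℝ) ^ d) *
              ∫ x in cube d, (∑ j ∈ splineIdx d q (J n), θ j * bsplineD (J n) q d j x) ^ 2
          ≤ C' * ∑ j ∈ splineIdx d q (J n), θ j ^ 2) :
    ∃ N : ℕ, ∀ n ≥ N, ∀ θ : (Fin d → ℤ) → ℝ,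
      (c / 2) * ∑ j ∈ splineIdx d q (J n), θ j ^ 2
          ≤ ((J n : ℝ) ^ d) *
              ∫ x in cube d, (∑ j ∈ splineIdx d q (J n), θ j * φ n j x) ^ 2
        ∧ ((J n : ℝ) ^ d) *
              ∫ x in cube d, (∑ j ∈ splineIdx d q (J n), θ j * φ n j x) ^ 2
          ≤ 2 * C' * ∑ j ∈ splineIdx d q (J n), θ j ^ 2 := by
  set m : ℝ := min (c / 12) (C' / 6) with hm_def
  have hm : 0 < m := lt_min (by linarith) (by linarith)
  have hqd : (0:ℝ) < (q:ℝ) ^ d := by positivity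
  have hCq : (0:ℝ) < C ^ 2 * (q:ℝ) ^ d := by positivity
  have hev : ∀ᶠ n : ℕ in atTop,
      ((J n : ℝ) ^ d) ^ 2 / n < m / (C ^ 2 * (q:ℝ) ^ d) ∧ 1 ≤ n := by
    refine (hk.eventually (gt_mem_nhds (by positivity))).and (eventually_ge_atTop 1)
  obtain ⟨N, hN⟩ := eventually_atTop.mp hev
  refine ⟨N, fun n hn θ => ?_⟩
  obtain ⟨hsmall, hn1⟩ := hN n hn
  obtain ⟨hQl, hQu⟩ := hQ n θ
  -- notation
  set S := splineIdx d q (J n) with hS_def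
  set s : ℝ := ∑ j ∈ S, θ j ^ 2 with hs_def
  set k : ℝ := (J n : ℝ) ^ d with hk_def
  have hs0 : 0 ≤ s := Finset.sum_nonneg fun j _ => sq_nonneg _
  have hk1 : (1:ℝ) ≤ k := one_le_pow₀ (by exact_mod_cast hJ n)
  have hk0 : (0:ℝ) < k := by linarith
  have hn0 : (0:ℝ) < n := by exact_mod_cast hn1
  -- the functions
  set g : (Fin d → ℝ) → ℝ := fun x => ∑ j ∈ S, θ j * bsplineD (J n) q d j x with hg_def
  set f : (Fin d → ℝ) → ℝ := fun x => ∑ j ∈ S, θ j * φ n j x with hf_def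
  set h : (Fin d → ℝ) → ℝ := fun x => f x - g x with hh_def
  have hBeq : (∫ x in cube d, (∑ j ∈ S, θ j * bsplineD (J n) q d j x) ^ 2)
      = ∫ x in cube d, g x ^ 2 := rfl
  have hAeq : (∫ x in cube d, (∑ j ∈ S, θ j * φ n j x) ^ 2)
      = ∫ x in cube d, f x ^ 2 := rfl
  rw [hBeq] at hQl hQu
  rw [hAeq]
  have hgm : Measurable g := Finset.measurable_sum _ fun j _ =>
    (bsplineD_measurable (J n) q d j).const_mul (θ j)
  have hfm : Measurable f := Finset.measurable_sum _ fun j _ =>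
    (hmeas n j).const_mul (θ j)
  have hhm : Measurable h := hfm.sub hgm
  -- cardinality of S
  set K : ℝ := (S.card : ℝ) with hK_def
  have hK0 : 0 ≤ K := Nat.cast_nonneg _
  have hKle : K ≤ (q:ℝ) ^ d * k := by
    have hcard : S.card = (J n + q - 1) ^ d := by
      rw [hS_def, splineIdx, Fintype.card_piFinset]
      have : (Finset.Icc (1 - (q:ℤ)) ((J n : ℤ) - 1)).card = J n + q - 1 := by
        rw [Int.card_Icc]
        have h1 := hJ n
        omega
      simp [this]
    have hle : (J n + q - 1 : ℕ) ≤ q * J n := by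
      obtain ⟨q', rfl⟩ : ∃ q', q = q' + 1 := ⟨q - 1, by omega⟩
      have h2 : q' ≤ q' * J n := Nat.le_mul_of_pos_right q' (hJ n)
      calc J n + (q' + 1) - 1 = J n + q' := by omega
        _ ≤ J n + q' * J n := by omega
        _ = (q' + 1) * J n := by ring
    rw [hK_def, hcard, hk_def]
    calc (((J n + q - 1) ^ d : ℕ) : ℝ) = ((J n + q - 1 : ℕ) : ℝ) ^ d := by push_cast; ring
      _ ≤ ((q * J n : ℕ) : ℝ) ^ d := by
          apply pow_le_pow_left₀ (by positivity)
          exact_mod_cast hle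
      _ = (q:ℝ) ^ d * (J n : ℝ) ^ d := by push_cast; ring
  -- pointwise bounds
  have hsum_abs : ∀ x, |h x| ≤ (∑ j ∈ S, |θ j|) * (C / n) := by
    intro x
    have hx : h x = ∑ j ∈ S, θ j * (φ n j x - bsplineD (J n) q d j x) := by
      rw [hh_def]; simp only [hf_def, hg_def]
      rw [← Finset.sum_sub_distrib]
      apply Finset.sum_congr rfl; intro j _; ring
    rw [hx]
    calc |∑ j ∈ S, θ j * (φ n j x - bsplineD (J n) q d j x)|
        ≤ ∑ j ∈ S, |θ j * (φ n j x - bsplineD (J n) q d j x)| :=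
          Finset.abs_sum_le_sum_abs _ _
      _ ≤ ∑ j ∈ S, |θ j| * (C / n) := by
          apply Finset.sum_le_sum
          intro j _
          rw [abs_mul]
          apply mul_le_mul_of_nonneg_left ?_ (abs_nonneg _)
          rw [abs_sub_comm]
          exact happrox n j x
      _ = (∑ j ∈ S, |θ j|) * (C / n) := by rw [← Finset.sum_mul]
  have hh_sq : ∀ x, h x ^ 2 ≤ (C / n) ^ 2 * (K * s) := by
    intro x
    have h1 : h x ^ 2 ≤ ((∑ j ∈ S, |θ j|) * (C / n)) ^ 2 := by
      rw [← sq_abs (h x)]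
      apply pow_le_pow_left₀ (abs_nonneg _) (hsum_abs x)
    have h2 : (∑ j ∈ S, |θ j|) ^ 2 ≤ K * s := by
      have := sq_sum_le_card_mul_sum_sq (s := S) (f := fun j => |θ j|)
      simpa [hs_def, hK_def, sq_abs] using this
    have hCn : (0:ℝ) ≤ (C / n) ^ 2 := sq_nonneg _
    calc h x ^ 2 ≤ ((∑ j ∈ S, |θ j|) * (C / n)) ^ 2 := h1
      _ = (C / n) ^ 2 * (∑ j ∈ S, |θ j|) ^ 2 := by ring
      _ ≤ (C / n) ^ 2 * (K * s) := mul_le_mul_of_nonneg_left h2 hCn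
  -- bounds for f and g
  set Mb : ℝ := ((2:ℝ) ^ q) ^ d with hMb_def
  have hMb0 : 0 ≤ Mb := by positivity
  have hg_bd : ∀ x, g x ^ 2 ≤ ((∑ j ∈ S, |θ j|) * Mb) ^ 2 := by
    intro x
    rw [← sq_abs (g x)]
    apply pow_le_pow_left₀ (abs_nonneg _)
    calc |g x| ≤ ∑ j ∈ S, |θ j * bsplineD (J n) q d j x| := Finset.abs_sum_le_sum_abs _ _
      _ ≤ ∑ j ∈ S, |θ j| * Mb := by
          apply Finset.sum_le_sum; intro j _
          rw [abs_mul]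
          exact mul_le_mul_of_nonneg_left (bsplineD_abs_le _ _ _ _ _) (abs_nonneg _)
      _ = (∑ j ∈ S, |θ j|) * Mb := by rw [← Finset.sum_mul]
  have hphi_bd : ∀ j x, |φ n j x| ≤ Mb + C := by
    intro j x
    have h1 := happrox n j x
    have h2 := bsplineD_abs_le (J n) q d j x
    have hCn : C / n ≤ C := by
      rw [div_le_iff₀ hn0]
      nlinarith [(by exact_mod_cast hn1 : (1:ℝ) ≤ n)]
    calc |φ n j x| = |bsplineD (J n) q d j x - (bsplineD (J n) q d j x - φ n j x)| := by
          ring_nf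
      _ ≤ |bsplineD (J n) q d j x| + |bsplineD (J n) q d j x - φ n j x| := abs_sub _ _
      _ ≤ Mb + C := add_le_add h2 (le_trans h1 hCn)
  have hf_bd : ∀ x, f x ^ 2 ≤ ((∑ j ∈ S, |θ j|) * (Mb + C)) ^ 2 := by
    intro x
    rw [← sq_abs (f x)]
    apply pow_le_pow_left₀ (abs_nonneg _)
    calc |f x| ≤ ∑ j ∈ S, |θ j * φ n j x| := Finset.abs_sum_le_sum_abs _ _
      _ ≤ ∑ j ∈ S, |θ j| * (Mb + C) := by
          apply Finset.sum_le_sum; intro j _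
          rw [abs_mul]
          exact mul_le_mul_of_nonneg_left (hphi_bd j x) (abs_nonneg _)
      _ = (∑ j ∈ S, |θ j|) * (Mb + C) := by rw [← Finset.sum_mul]
  -- integrability and integral bounds
  obtain ⟨hIf, -⟩ := sq_helper d f hfm _ hf_bd
  obtain ⟨hIg, -⟩ := sq_helper d g hgm _ hg_bd
  obtain ⟨hIh, hHle⟩ := sq_helper d h hhm _ hh_sq
  set A : ℝ := ∫ x in cube d, f x ^ 2 with hA_def
  set B : ℝ := ∫ x in cube d, g x ^ 2 with hB_def
  set H : ℝ := ∫ x in cube d, h x ^ 2 with hH_def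
  have hA0 : 0 ≤ A := setIntegral_nonneg (measurableSet_cube d) fun x _ => sq_nonneg _
  have hB0 : 0 ≤ B := setIntegral_nonneg (measurableSet_cube d) fun x _ => sq_nonneg _
  have hH0 : 0 ≤ H := setIntegral_nonneg (measurableSet_cube d) fun x _ => sq_nonneg _
  clear hBeq hAeq
  -- comparison inequalities
  have key1 : ∀ a b : ℝ, (a + b) ^ 2 ≤ 4/3 * a ^ 2 + 4 * b ^ 2 := fun a b => by
    nlinarith [sq_nonneg (a - 3 * b)]
  have key2 : ∀ a b : ℝ, (a - b) ^ 2 ≤ 4/3 * a ^ 2 + 4 * b ^ 2 := fun a b => by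
    nlinarith [sq_nonneg (a + 3 * b)]
  have hAB : A ≤ (4/3) * B + 4 * H := by
    have hpt : ∀ x, f x ^ 2 ≤ (4/3) * g x ^ 2 + 4 * h x ^ 2 := by
      intro x
      have hfx : f x = g x + h x := by rw [hh_def]; ring
      rw [hfx]
      exact key1 (g x) (h x)
    calc A ≤ ∫ x in cube d, ((4/3) * g x ^ 2 + 4 * h x ^ 2) := by
          apply setIntegral_mono_on hIf ((hIg.const_mul (4/3)).add (hIh.const_mul 4))
            (measurableSet_cube d) (fun x _ => hpt x)
      _ = (4/3) * B + 4 * H := by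
          rw [integral_add (hIg.const_mul (4/3)) (hIh.const_mul 4),
            integral_const_mul, integral_const_mul]
  have hBA : B ≤ (4/3) * A + 4 * H := by
    have hpt : ∀ x, g x ^ 2 ≤ (4/3) * f x ^ 2 + 4 * h x ^ 2 := by
      intro x
      have hgx : g x = f x - h x := by rw [hh_def]; ring
      rw [hgx]
      exact key2 (f x) (h x)
    calc B ≤ ∫ x in cube d, ((4/3) * f x ^ 2 + 4 * h x ^ 2) := by
          apply setIntegral_mono_on hIg ((hIf.const_mul (4/3)).add (hIh.const_mul 4))
            (measurableSet_cube d) (fun x _ => hpt x)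
      _ = (4/3) * A + 4 * H := by
          rw [integral_add (hIf.const_mul (4/3)) (hIh.const_mul 4),
            integral_const_mul, integral_const_mul]
  -- the key smallness: k * H ≤ m * s
  have hkH : k * H ≤ m * s := by
    have h1 : k * H ≤ k * ((C / n) ^ 2 * (K * s)) :=
      mul_le_mul_of_nonneg_left hHle (le_of_lt hk0)
    have h2 : k * ((C / n) ^ 2 * (K * s)) ≤ k * ((C / n) ^ 2 * (((q:ℝ) ^ d * k) * s)) := by
      apply mul_le_mul_of_nonneg_left _ (le_of_lt hk0)
      apply mul_le_mul_of_nonneg_left _ (sq_nonneg _)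
      exact mul_le_mul_of_nonneg_right hKle hs0
    have h3 : k * ((C / n) ^ 2 * (((q:ℝ) ^ d * k) * s))
        = (C ^ 2 * (q:ℝ) ^ d) * (k ^ 2 / (n:ℝ) ^ 2) * s := by
      field_simp
    have h4 : k ^ 2 / (n:ℝ) ^ 2 ≤ k ^ 2 / n := by
      apply div_le_div_of_nonneg_left (by positivity) hn0
      nlinarith [(by exact_mod_cast hn1 : (1:ℝ) ≤ n)]
    have h5 : (C ^ 2 * (q:ℝ) ^ d) * (k ^ 2 / (n:ℝ) ^ 2) ≤ m := by
      calc (C ^ 2 * (q:ℝ) ^ d) * (k ^ 2 / (n:ℝ) ^ 2)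
          ≤ (C ^ 2 * (q:ℝ) ^ d) * (k ^ 2 / n) := mul_le_mul_of_nonneg_left h4 (le_of_lt hCq)
        _ ≤ (C ^ 2 * (q:ℝ) ^ d) * (m / (C ^ 2 * (q:ℝ) ^ d)) := by
            apply mul_le_mul_of_nonneg_left (le_of_lt hsmall) (le_of_lt hCq)
        _ = m := by field_simp
    calc k * H ≤ (C ^ 2 * (q:ℝ) ^ d) * (k ^ 2 / (n:ℝ) ^ 2) * s := by
          rw [← h3]; exact le_trans h1 h2
      _ ≤ m * s := mul_le_mul_of_nonneg_right h5 hs0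
  -- final linear arithmetic over the atoms k*A, k*B, k*H, s
  have hm1 : m ≤ c / 12 := min_le_left _ _
  have hm2 : m ≤ C' / 6 := min_le_right _ _
  have hms1 : m * s ≤ (c / 12) * s := mul_le_mul_of_nonneg_right hm1 hs0
  have hms2 : m * s ≤ (C' / 6) * s := mul_le_mul_of_nonneg_right hm2 hs0
  have hkH0 : 0 ≤ k * H := mul_nonneg (le_of_lt hk0) hH0
  have kAB : k * A ≤ (4/3) * (k * B) + 4 * (k * H) := by
    calc k * A ≤ k * ((4/3) * B + 4 * H) := mul_le_mul_of_nonneg_left hAB (le_of_lt hk0)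
      _ = (4/3) * (k * B) + 4 * (k * H) := by ring
  have kBA : k * B ≤ (4/3) * (k * A) + 4 * (k * H) := by
    calc k * B ≤ k * ((4/3) * A + 4 * H) := mul_le_mul_of_nonneg_left hBA (le_of_lt hk0)
      _ = (4/3) * (k * A) + 4 * (k * H) := by ring
  constructor
  · linarith
  · linarith

end
end

section
/- (Prior small-ball mass ratio bound.) Let φ₁,…,φ_k be basis functions with Gram matrix satisfying c_m^{−1} I_k ≤ Σ_k ≤ c_m I_k (c_m ≥ 1), f_θ = Σ θ_i φ_i, and let Π_k be a product prior dΠ_k(θ) = Π_{j=1}^k g(θ_j) dθ with c̲ ≤ g ≤ c̄ on a sufficiently large compact interval containing a neighborhood of θ*. Let f* = f_{θ*} be the L₂-projection of a bounded f₀ onto the span of the basis, and set ε_n = √(k/n). Then there exists J > 0 (depending only on c_m, c̲, c̄) such that for all j ≥ J: Π_k( θ : j ε_n ≤ ‖f_θ − f*‖₂ ≤ 2 j ε_n ) / Π_k( θ : ‖f_θ − f*‖₂ ≤ ε_n ) ≤ e^{ j² k / 8 }. -/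
open MeasureTheory

noncomputable section

/-- `L²([0,1]^d)` distance between two functions. -/
def l2dist (d : ℕ) (f g : (Fin d → ℝ) → ℝ) : ℝ :=
  Real.sqrt (∫ x in cube d, (f x - g x) ^ 2)

/-- Linear combination of basis functions. -/
def lincomb {d k : ℕ} (φ : Fin k → (Fin d → ℝ) → ℝ) (θ : Fin k → ℝ) :
    (Fin d → ℝ) → ℝ :=
  fun x => ∑ j, θ j * φ j x

/-- Product prior on coefficients with one-dimensional Lebesgue density `g`. -/
def priorMeasure (k : ℕ) (g : ℝ → ℝ) : Measure (Fin k → ℝ) :=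
  Measure.pi fun _ : Fin k => volume.withDensity fun t => ENNReal.ofReal (g t)

open scoped ENNReal

lemma lintegral_pi_prod {n : ℕ} (μ : Fin n → Measure ℝ) [∀ i, SigmaFinite (μ i)]
    (f : Fin n → ℝ → ℝ≥0∞) (hf : ∀ i, Measurable (f i)) :
    ∫⁻ x, ∏ i, f i (x i) ∂Measure.pi μ = ∏ i, ∫⁻ t, f i t ∂μ i := by
  induction n with
  | zero => simp
  | succ n ih =>
    have h := (measurePreserving_piFinSuccAbove μ 0).symm
    have hF : Measurable fun x : Fin (n+1) → ℝ => ∏ i, f i (x i) :=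
      Finset.measurable_prod _ fun i _ => (hf i).comp (measurable_pi_apply i)
    rw [← h.lintegral_comp hF]
    simp only [MeasurableEquiv.piFinSuccAbove_symm_apply, Fin.insertNthEquiv,
      Fin.insertNth_zero, Equiv.coe_fn_mk, Fin.prod_univ_succ, Fin.cons_zero, Fin.cons_succ,
      cast_eq]
    rw [lintegral_prod_mul (f := fun t => f 0 t)
      (g := fun y : Fin n → ℝ => ∏ i : Fin n, f i.succ (y i)) (hf 0).aemeasurable
      (Finset.measurable_prod _ fun i _ => (hf i.succ).comp (measurable_pi_apply i)).aemeasurable]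
    rw [ih (fun i => μ (Fin.succAbove 0 i)) (fun i => f i.succ) (fun i => hf i.succ)]
    simp [Fin.prod_univ_succ, Fin.zero_succAbove]

lemma pi_withDensity_eq (k : ℕ) (g : ℝ → ℝ) (hg : Measurable g) :
    Measure.pi (fun _ : Fin k => volume.withDensity fun t => ENNReal.ofReal (g t)) =
      (volume : Measure (Fin k → ℝ)).withDensity
        (fun θ => ∏ i, ENNReal.ofReal (g (θ i))) := by
  refine Measure.pi_eq fun s hs => ?_
  rw [withDensity_apply _ (MeasurableSet.univ_pi hs),
    ← lintegral_indicator (MeasurableSet.univ_pi hs)]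
  have hind : ∀ θ : Fin k → ℝ,
      (Set.univ.pi s).indicator (fun θ => ∏ i, ENNReal.ofReal (g (θ i))) θ =
        ∏ i, (s i).indicator (fun t => ENNReal.ofReal (g t)) (θ i) := by
    intro θ
    by_cases hθ : θ ∈ Set.univ.pi s
    · rw [Set.indicator_of_mem hθ]
      exact Finset.prod_congr rfl fun i _ =>
        (Set.indicator_of_mem (hθ i (Set.mem_univ i)) (fun t => ENNReal.ofReal (g t))).symm
    · rw [Set.indicator_of_notMem hθ]
      simp only [Set.mem_pi, Set.mem_univ, true_implies, not_forall] at hθ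
      obtain ⟨i, hi⟩ := hθ
      exact (Finset.prod_eq_zero (Finset.mem_univ i)
        (Set.indicator_of_notMem hi _)).symm
  simp_rw [hind]
  rw [volume_pi, lintegral_pi_prod (fun _ => volume)
    (fun i t => (s i).indicator (fun t => ENNReal.ofReal (g t)) t)
    (fun i => (hg.ennreal_ofReal).indicator (hs i))]
  refine Finset.prod_congr rfl fun i _ => ?_
  rw [lintegral_indicator (hs i), withDensity_apply _ (hs i)]

lemma vol_sum_sq_ball (k : ℕ) (θstar : Fin k → ℝ) {ρ : ℝ} (hρ : 0 ≤ ρ) :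
    (volume : Measure (Fin k → ℝ)) {θ : Fin k → ℝ | ∑ i, (θ i - θstar i) ^ 2 ≤ ρ ^ 2} =
      ENNReal.ofReal (ρ ^ k) *
        volume (Metric.ball (0 : EuclideanSpace ℝ (Fin k)) 1) := by
  have hmeas : MeasurableSet {θ : Fin k → ℝ | ∑ i, (θ i - θstar i) ^ 2 ≤ ρ ^ 2} := by
    have hm : Measurable fun θ : Fin k → ℝ => ∑ i, (θ i - θstar i) ^ 2 := by fun_prop
    exact hm measurableSet_Iic
  rw [← (EuclideanSpace.volume_preserving_symm_measurableEquiv_toLp (Fin k)).measure_preimage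
    hmeas.nullMeasurableSet]
  have hset : (MeasurableEquiv.toLp 2 (Fin k → ℝ)).symm ⁻¹'
      {θ : Fin k → ℝ | ∑ i, (θ i - θstar i) ^ 2 ≤ ρ ^ 2} =
      Metric.closedBall ((WithLp.equiv 2 _).symm θstar : EuclideanSpace ℝ (Fin k)) ρ := by
    ext x
    simp [EuclideanSpace.dist_eq, Real.dist_eq, sq_abs]
    rw [Real.sqrt_le_left hρ]
  rw [hset, Measure.addHaar_closedBall _ _ hρ, finrank_euclideanSpace_fin]

/-- Prior small-ball mass ratio bound. For a product prior with
density bounded between `c̲` and `c̄` on a sufficiently large compact interval containing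
a neighborhood of `θ*` (the coefficients of the `L₂`-projection `f* = f_{θ*}` of a bounded
`f₀` onto the span of a nearly orthogonal basis), there is `J > 0`, depending only on
`c_m, c̲, c̄`, such that for all `j ≥ J`, with `ε_n = √(k/n)`,
`Π_k( jε_n ≤ ‖f_θ − f*‖₂ ≤ 2jε_n ) ≤ e^{j²k/8} · Π_k( ‖f_θ − f*‖₂ ≤ ε_n )`. -/
theorem prior_small_ball_ratio (c_m cl cu : ℝ) (hcm : 1 ≤ c_m) (hcl : 0 < cl)
    (hclcu : cl ≤ cu) :
    ∃ J : ℝ, 0 < J ∧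
      ∀ (d k n : ℕ), 1 ≤ d → 1 ≤ k → 1 ≤ n →
      ∀ (φ : Fin k → (Fin d → ℝ) → ℝ), (∀ j, Measurable (φ j)) →
        (∀ θ : Fin k → ℝ,
          c_m⁻¹ * ∑ j, θ j ^ 2 ≤ ∫ x in cube d, lincomb φ θ x ^ 2
            ∧ ∫ x in cube d, lincomb φ θ x ^ 2 ≤ c_m * ∑ j, θ j ^ 2) →
      ∀ (g : ℝ → ℝ), Measurable g →
      ∀ (M' M₀ : ℝ) (f₀ : (Fin d → ℝ) → ℝ) (θstar : Fin k → ℝ),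
        (∀ x ∈ cube d, |f₀ x| ≤ M₀) →
        (∀ θ : Fin k → ℝ, l2dist d (lincomb φ θstar) f₀ ≤ l2dist d (lincomb φ θ) f₀) →
        (∀ j, |θstar j| + 1 ≤ M') →
        (∀ x : ℝ, |x| ≤ M' → cl ≤ g x) →
        (∀ x : ℝ, g x ≤ cu) →
        Real.sqrt (k / n) ≤ 1 →
      ∀ j : ℝ, J ≤ j →
        priorMeasure k g
            {θ : Fin k → ℝ |
              j * Real.sqrt (k / n) ≤ l2dist d (lincomb φ θ) (lincomb φ θstar)
                ∧ l2dist d (lincomb φ θ) (lincomb φ θstar) ≤ 2 * j * Real.sqrt (k / n)}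
          ≤ ENNReal.ofReal (Real.exp (j ^ 2 * k / 8)) *
              priorMeasure k g
                {θ : Fin k → ℝ |
                  l2dist d (lincomb φ θ) (lincomb φ θstar) ≤ Real.sqrt (k / n)} := by
  refine ⟨max 1 (16 * c_m * cu / cl), lt_of_lt_of_le one_pos (le_max_left _ _), ?_⟩
  intro d k n hd hk hn φ hφ hGram g hg M' M₀ f₀ θstar hM₀ hproj hθM hgl hgu hεle j hj
  have hc_m0 : (0:ℝ) < c_m := lt_of_lt_of_le one_pos hcm
  have hcu : (0:ℝ) < cu := lt_of_lt_of_le hcl hclcu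
  set ε := Real.sqrt ((k:ℝ) / n) with hεdef
  have hk0 : (0:ℝ) < (k:ℝ) := by exact_mod_cast hk
  have hn0 : (0:ℝ) < (n:ℝ) := by exact_mod_cast hn
  have hε : 0 < ε := Real.sqrt_pos.2 (div_pos hk0 hn0)
  have hj1 : (1:ℝ) ≤ j := le_trans (le_max_left _ _) hj
  have hj0 : (0:ℝ) < j := lt_of_lt_of_le one_pos hj1
  have hjJ : 16 * c_m * cu / cl ≤ j := le_trans (le_max_right _ _) hj
  have hscm : 0 < Real.sqrt c_m := Real.sqrt_pos.2 hc_m0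
  have hscm1 : 1 ≤ Real.sqrt c_m := by
    rw [show (1:ℝ) = Real.sqrt 1 by simp]
    exact Real.sqrt_le_sqrt hcm
  set R := 2 * j * ε * Real.sqrt c_m with hRdef
  set r := ε / Real.sqrt c_m with hrdef
  have hR0 : 0 ≤ R := by positivity
  have hr0 : 0 < r := div_pos hε hscm
  have hsq : Real.sqrt c_m ^ 2 = c_m := Real.sq_sqrt hc_m0.le
  -- l2 distance identity
  have hdiff : ∀ θ : Fin k → ℝ, l2dist d (lincomb φ θ) (lincomb φ θstar)
      = Real.sqrt (∫ x in cube d, lincomb φ (θ - θstar) x ^ 2) := by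
    intro θ
    have hfun : ∀ x, lincomb φ θ x - lincomb φ θstar x = lincomb φ (θ - θstar) x := by
      intro x
      simp [lincomb, sub_mul, Finset.sum_sub_distrib]
    unfold l2dist
    simp_rw [hfun]
  -- the Euclidean-type sets
  have hnum_sub : {θ : Fin k → ℝ |
        j * ε ≤ l2dist d (lincomb φ θ) (lincomb φ θstar)
          ∧ l2dist d (lincomb φ θ) (lincomb φ θstar) ≤ 2 * j * ε}
      ⊆ {θ : Fin k → ℝ | ∑ i, (θ i - θstar i) ^ 2 ≤ R ^ 2} := by
    rintro θ ⟨-, h2⟩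
    rw [hdiff θ] at h2
    have hI := hGram (θ - θstar)
    have hIle : ∫ x in cube d, lincomb φ (θ - θstar) x ^ 2 ≤ (2 * j * ε) ^ 2 :=
      (Real.sqrt_le_left (by positivity)).1 h2
    have hSle : ∑ i, (θ - θstar) i ^ 2 ≤ c_m * (2 * j * ε) ^ 2 := by
      have h1 := hI.1
      have : ∑ i, (θ - θstar) i ^ 2 = c_m * (c_m⁻¹ * ∑ i, (θ - θstar) i ^ 2) := by
        field_simp
      rw [this]
      exact mul_le_mul_of_nonneg_left (le_trans h1 hIle) hc_m0.le
    have hR2 : R ^ 2 = c_m * (2 * j * ε) ^ 2 := by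
      rw [hRdef, mul_pow, hsq]; ring
    rw [Set.mem_setOf_eq, hR2]
    simpa [Pi.sub_apply] using hSle
  have hden_sub : {θ : Fin k → ℝ | ∑ i, (θ i - θstar i) ^ 2 ≤ r ^ 2}
      ⊆ {θ : Fin k → ℝ | l2dist d (lincomb φ θ) (lincomb φ θstar) ≤ ε} := by
    intro θ hθ
    have hI := hGram (θ - θstar)
    have hS : ∑ i, (θ - θstar) i ^ 2 ≤ r ^ 2 := by
      simpa [Pi.sub_apply] using hθ
    have hr2 : c_m * r ^ 2 = ε ^ 2 := by
      rw [hrdef, div_pow, hsq]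
      field_simp
    have hIle : ∫ x in cube d, lincomb φ (θ - θstar) x ^ 2 ≤ ε ^ 2 := by
      calc ∫ x in cube d, lincomb φ (θ - θstar) x ^ 2
          ≤ c_m * ∑ i, (θ - θstar) i ^ 2 := hI.2
        _ ≤ c_m * r ^ 2 := mul_le_mul_of_nonneg_left hS hc_m0.le
        _ = ε ^ 2 := hr2
    show l2dist d (lincomb φ θ) (lincomb φ θstar) ≤ ε
    rw [hdiff θ]
    calc Real.sqrt (∫ x in cube d, lincomb φ (θ - θstar) x ^ 2)
        ≤ Real.sqrt (ε ^ 2) := Real.sqrt_le_sqrt hIle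
      _ = ε := Real.sqrt_sq hε.le
  -- density bounds on the small ball
  have hr1 : r ≤ 1 := le_trans (div_le_self hε.le hscm1) hεle
  have hglb : ∀ θ : Fin k → ℝ, θ ∈ {θ : Fin k → ℝ | ∑ i, (θ i - θstar i) ^ 2 ≤ r ^ 2} →
      ∀ i, cl ≤ g (θ i) := by
    intro θ hθ i
    refine hgl _ ?_
    have h1 : (θ i - θstar i) ^ 2 ≤ r ^ 2 :=
      le_trans (Finset.single_le_sum (f := fun i => (θ i - θstar i) ^ 2)
        (fun i _ => sq_nonneg _) (Finset.mem_univ i)) hθ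
    have h2 : |θ i - θstar i| ≤ r := by
      rw [← Real.sqrt_sq_eq_abs]
      calc Real.sqrt ((θ i - θstar i) ^ 2) ≤ Real.sqrt (r ^ 2) := Real.sqrt_le_sqrt h1
        _ = r := Real.sqrt_sq hr0.le
    calc |θ i| = |θstar i + (θ i - θstar i)| := by ring_nf
      _ ≤ |θstar i| + |θ i - θstar i| := abs_add_le _ _
      _ ≤ |θstar i| + 1 := by linarith
      _ ≤ M' := hθM i
  -- rewrite the prior
  have hprior : priorMeasure k g =
      (volume : Measure (Fin k → ℝ)).withDensity
        (fun θ => ∏ i, ENNReal.ofReal (g (θ i))) := pi_withDensity_eq k g hg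
  have hFmeas : Measurable fun θ : Fin k → ℝ => ∏ i, ENNReal.ofReal (g (θ i)) :=
    Finset.measurable_prod _ fun i _ => (hg.comp (measurable_pi_apply i)).ennreal_ofReal
  have hBmeas : ∀ ρ : ℝ, MeasurableSet {θ : Fin k → ℝ | ∑ i, (θ i - θstar i) ^ 2 ≤ ρ ^ 2} := by
    intro ρ
    have hm : Measurable fun θ : Fin k → ℝ => ∑ i, (θ i - θstar i) ^ 2 := by fun_prop
    exact hm measurableSet_Iic
  set C := volume (Metric.ball (0 : EuclideanSpace ℝ (Fin k)) 1) with hCdef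
  -- numerator bound
  have hnum : priorMeasure k g
      {θ : Fin k → ℝ |
        j * ε ≤ l2dist d (lincomb φ θ) (lincomb φ θstar)
          ∧ l2dist d (lincomb φ θ) (lincomb φ θstar) ≤ 2 * j * ε}
      ≤ ENNReal.ofReal ((cu * R) ^ k) * C := by
    calc priorMeasure k g _
        ≤ priorMeasure k g {θ : Fin k → ℝ | ∑ i, (θ i - θstar i) ^ 2 ≤ R ^ 2} :=
          measure_mono hnum_sub
      _ = ∫⁻ θ in {θ : Fin k → ℝ | ∑ i, (θ i - θstar i) ^ 2 ≤ R ^ 2},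
            ∏ i, ENNReal.ofReal (g (θ i)) := by
          rw [hprior, withDensity_apply _ (hBmeas R)]
      _ ≤ ∫⁻ _ in {θ : Fin k → ℝ | ∑ i, (θ i - θstar i) ^ 2 ≤ R ^ 2},
            (ENNReal.ofReal cu) ^ k := by
          refine setLIntegral_mono measurable_const fun θ _ => ?_
          calc ∏ i, ENNReal.ofReal (g (θ i))
              ≤ ∏ _i : Fin k, ENNReal.ofReal cu :=
                Finset.prod_le_prod' fun i _ => ENNReal.ofReal_le_ofReal (hgu _)
            _ = (ENNReal.ofReal cu) ^ k := by simp
      _ = (ENNReal.ofReal cu) ^ k *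
            volume {θ : Fin k → ℝ | ∑ i, (θ i - θstar i) ^ 2 ≤ R ^ 2} :=
          setLIntegral_const _ _
      _ = ENNReal.ofReal ((cu * R) ^ k) * C := by
          rw [vol_sum_sq_ball k θstar hR0, ← hCdef, ← mul_assoc,
            ← ENNReal.ofReal_pow hcu.le, ← ENNReal.ofReal_mul (pow_nonneg hcu.le k),
            ← mul_pow]
  -- denominator bound
  have hden : ENNReal.ofReal ((cl * r) ^ k) * C ≤ priorMeasure k g
      {θ : Fin k → ℝ | l2dist d (lincomb φ θ) (lincomb φ θstar) ≤ ε} := by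
    calc ENNReal.ofReal ((cl * r) ^ k) * C
        = (ENNReal.ofReal cl) ^ k *
            volume {θ : Fin k → ℝ | ∑ i, (θ i - θstar i) ^ 2 ≤ r ^ 2} := by
          rw [vol_sum_sq_ball k θstar hr0.le, ← hCdef, ← mul_assoc,
            ← ENNReal.ofReal_pow hcl.le, ← ENNReal.ofReal_mul (pow_nonneg hcl.le k),
            ← mul_pow]
      _ = ∫⁻ _ in {θ : Fin k → ℝ | ∑ i, (θ i - θstar i) ^ 2 ≤ r ^ 2},
            (ENNReal.ofReal cl) ^ k := (setLIntegral_const _ _).symm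
      _ ≤ ∫⁻ θ in {θ : Fin k → ℝ | ∑ i, (θ i - θstar i) ^ 2 ≤ r ^ 2},
            ∏ i, ENNReal.ofReal (g (θ i)) := by
          refine setLIntegral_mono hFmeas fun θ hθ => ?_
          calc (ENNReal.ofReal cl) ^ k = ∏ _i : Fin k, ENNReal.ofReal cl := by simp
            _ ≤ ∏ i, ENNReal.ofReal (g (θ i)) :=
              Finset.prod_le_prod' fun i _ => ENNReal.ofReal_le_ofReal (hglb θ hθ i)
      _ = priorMeasure k g {θ : Fin k → ℝ | ∑ i, (θ i - θstar i) ^ 2 ≤ r ^ 2} := by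
          rw [hprior, withDensity_apply _ (hBmeas r)]
      _ ≤ priorMeasure k g
            {θ : Fin k → ℝ | l2dist d (lincomb φ θ) (lincomb φ θstar) ≤ ε} :=
          measure_mono hden_sub
  -- scalar inequality
  have hexp : j ^ 2 / 8 ≤ Real.exp (j ^ 2 / 8) := by
    have := Real.add_one_le_exp (j ^ 2 / 8)
    linarith
  have h2 : 2 * j * c_m * cu ≤ Real.exp (j ^ 2 / 8) * cl := by
    have hjc : 16 * c_m * cu ≤ j * cl := by
      have := mul_le_mul_of_nonneg_right hjJ hcl.le
      rwa [div_mul_cancel₀ _ (ne_of_gt hcl)] at this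
    nlinarith [mul_le_mul_of_nonneg_right hexp hcl.le, sq_nonneg j,
      mul_le_mul_of_nonneg_left hjc hj0.le]
  have hstep : cu * R ≤ Real.exp (j ^ 2 / 8) * (cl * r) := by
    rw [← mul_le_mul_iff_left₀ hscm]
    have hL : cu * R * Real.sqrt c_m = 2 * j * c_m * cu * ε := by
      rw [hRdef]
      calc cu * (2 * j * ε * Real.sqrt c_m) * Real.sqrt c_m
          = 2 * j * ε * cu * (Real.sqrt c_m * Real.sqrt c_m) := by ring
        _ = 2 * j * ε * cu * c_m := by rw [Real.mul_self_sqrt hc_m0.le]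
        _ = 2 * j * c_m * cu * ε := by ring
    have hR' : Real.exp (j ^ 2 / 8) * (cl * r) * Real.sqrt c_m
        = Real.exp (j ^ 2 / 8) * cl * ε := by
      rw [hrdef]
      field_simp
    rw [hL, hR']
    exact mul_le_mul_of_nonneg_right h2 hε.le
  have hkey : (cu * R) ^ k ≤ Real.exp (j ^ 2 * k / 8) * (cl * r) ^ k := by
    calc (cu * R) ^ k ≤ (Real.exp (j ^ 2 / 8) * (cl * r)) ^ k :=
          pow_le_pow_left₀ (by positivity) hstep k
      _ = Real.exp (j ^ 2 / 8) ^ k * (cl * r) ^ k := mul_pow _ _ _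
      _ = Real.exp (j ^ 2 * k / 8) * (cl * r) ^ k := by
          rw [← Real.exp_nat_mul, show ((k : ℕ) : ℝ) * (j ^ 2 / 8) = j ^ 2 * k / 8 from by ring]
  refine le_trans hnum (le_trans (mul_le_mul_left
    (ENNReal.ofReal_le_ofReal hkey) C) ?_)
  rw [ENNReal.ofReal_mul (Real.exp_pos _).le, mul_assoc]
  exact mul_le_mul_right hden _

end
end
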